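/- arXiv:2105.00621 — 3 statements merged into one kernel-verified Lean document; each statement's English description precedes it below -/
import Mathlib

section
/- Let G = (V, E; w) be a graph with strictly positive edge weights whose matching game Γ_G admits a PMAS. Suppose vertices 1, 2, 3, 4 are distinct, the induced subgraph on {1,2,3} has edge set exactly {12, 23}, the induced subgraph on {2,3,4} has edge set exactly {23, 24, 34}, and w_{23} ≥ w_{24}. Then w_{23} ≥ w_{12} + w_{34} and w_{23} ≥ w_{24} + w_{34}. -/
open Finset

/-- `M` is a matching of the induced subgraph `G[S]`, given as a finite set of
(ordered representatives of) edges with endpoints in `S`, pairwise vertex-disjoint. -/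
def IsMatchingIn {V : Type*} (G : SimpleGraph V) (S : Finset V)
    (M : Finset (V × V)) : Prop :=
  (∀ p ∈ M, G.Adj p.1 p.2 ∧ p.1 ∈ S ∧ p.2 ∈ S) ∧
  (∀ p ∈ M, ∀ q ∈ M, p ≠ q →
    p.1 ≠ q.1 ∧ p.1 ≠ q.2 ∧ p.2 ≠ q.1 ∧ p.2 ≠ q.2)

/-- `r` is the maximum total weight of a matching in the induced subgraph `G[S]`. -/
def IsMaxMatchingWeight {V : Type*} (G : SimpleGraph V)
    (w : V → V → ℝ) (S : Finset V) (r : ℝ) : Prop :=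
  (∃ M : Finset (V × V), IsMatchingIn G S M ∧ ∑ p ∈ M, w p.1 p.2 = r) ∧
  (∀ M : Finset (V × V), IsMatchingIn G S M → ∑ p ∈ M, w p.1 p.2 ≤ r)

/-- A population monotonic allocation scheme (PMAS): `x S i` is the payoff of player `i`
in coalition `S`.  Efficiency holds for every nonempty coalition, and every player's
payoff is monotone under coalition inclusion. -/
def IsPMAS {N : Type*} [DecidableEq N] (γ : Finset N → ℝ)
    (x : Finset N → N → ℝ) : Prop :=
  (∀ S : Finset N, S.Nonempty → ∑ i ∈ S, x S i = γ S) ∧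
  (∀ S T : Finset N, S ⊆ T → ∀ i ∈ S, x S i ≤ x T i)

/-!
Write `P = {2, 3}`. By monotonicity, the payoff of `3` in `P` can be added to the value
`w₁₂` that `{1, 2}` secures inside `{1, 2, 3}`, and the payoffs of `2` and of `3` in `P`
to the values `w₃₄` and `w₂₄` secured inside `{2, 3, 4}`. A matching on three vertices
has at most one edge, so `γ{1,2,3} ≤ max w₁₂ w₂₃` and `γ{2,3,4} ≤ max w₂₃ w₃₄`. Summing
against `x_P(2) + x_P(3) ≥ w₂₃` gives both inequalities, once positivity of the weights
rules out the cases where a maximum is attained by an edge other than `23`.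
-/

section Matching

variable {V : Type*} {G : SimpleGraph V} {w : V → V → ℝ} {S : Finset V}

/-- The first and the second endpoints of the edges of a matching are `2 * #M` distinct
vertices of `S`. -/
theorem IsMatchingIn.two_mul_card_le [DecidableEq V] {M : Finset (V × V)}
    (hM : IsMatchingIn G S M) : 2 * #M ≤ #S := by
  have hfst : Set.InjOn Prod.fst (M : Set (V × V)) := fun p hp q hq hpq =>
    by_contra fun hne => (hM.2 p hp q hq hne).1 hpq
  have hsnd : Set.InjOn Prod.snd (M : Set (V × V)) := fun p hp q hq hpq =>
    by_contra fun hne => (hM.2 p hp q hq hne).2.2.2 hpq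
  have hdisj : Disjoint (M.image Prod.fst) (M.image Prod.snd) := by
    simp only [disjoint_left, mem_image, not_exists, not_and]
    rintro _ ⟨p, hp, rfl⟩ q hq hqp
    by_cases hpq : p = q
    · exact (hM.1 q hq).1.ne (hpq ▸ hqp).symm
    · exact (hM.2 p hp q hq hpq).2.1 hqp.symm
  have hsub : M.image Prod.fst ∪ M.image Prod.snd ⊆ S := by
    simp only [union_subset_iff, image_subset_iff]
    exact ⟨fun p hp => (hM.1 p hp).2.1, fun p hp => (hM.1 p hp).2.2⟩
  calc 2 * #M = #(M.image Prod.fst ∪ M.image Prod.snd) := by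
        rw [card_union_of_disjoint hdisj, card_image_of_injOn hfst, card_image_of_injOn hsnd]
        ring
    _ ≤ #S := card_le_card hsub

variable {r : ℝ}

theorem IsMaxMatchingWeight.weight_le (h : IsMaxMatchingWeight G w S r) {a b : V}
    (hab : G.Adj a b) (ha : a ∈ S) (hb : b ∈ S) : w a b ≤ r := by
  simpa using h.2 {(a, b)} ⟨by simp [hab, ha, hb], by simp⟩

theorem IsMaxMatchingWeight.le_of_card_le_three [DecidableEq V]
    (h : IsMaxMatchingWeight G w S r) (hS : #S ≤ 3) {B : ℝ} (hB : 0 ≤ B)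
    (hbound : ∀ a ∈ S, ∀ b ∈ S, G.Adj a b → w a b ≤ B) : r ≤ B := by
  obtain ⟨M, hM, rfl⟩ := h.1
  have hcard : #M ≤ 1 := by linarith [hM.two_mul_card_le]
  calc ∑ p ∈ M, w p.1 p.2 ≤ #M • B :=
        sum_le_card_nsmul _ _ _ fun p hp =>
          hbound _ (hM.1 p hp).2.1 _ (hM.1 p hp).2.2 (hM.1 p hp).1
    _ ≤ 1 • B := nsmul_le_nsmul_left hB hcard
    _ = B := one_nsmul B

theorem IsMaxMatchingWeight.le_of_triple [DecidableEq V] {a b c : V}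
    (h : IsMaxMatchingWeight G w {a, b, c} r) (hsym : ∀ u v, w u v = w v u) {B : ℝ}
    (hB : 0 ≤ B) (hab : G.Adj a b → w a b ≤ B) (hbc : G.Adj b c → w b c ≤ B)
    (hac : G.Adj a c → w a c ≤ B) : r ≤ B := by
  refine h.le_of_card_le_three card_le_three hB ?_
  simp only [mem_insert, mem_singleton]
  rintro u hu v hv huv
  rcases hu with hu | hu | hu <;> rcases hv with hv | hv | hv <;> subst u v
  all_goals first
    | exact absurd rfl huv.ne
    | exact hab huv
    | exact hbc huv
    | exact hac huv
    | exact hsym _ _ ▸ hab huv.symm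
    | exact hsym _ _ ▸ hbc huv.symm
    | exact hsym _ _ ▸ hac huv.symm

end Matching

namespace IsPMAS

variable {N : Type*} [DecidableEq N] {γ : Finset N → ℝ} {x : Finset N → N → ℝ}

theorem payoff_add_payoff (hx : IsPMAS γ x) {a b : N} (hab : a ≠ b) :
    x {a, b} a + x {a, b} b = γ {a, b} := by
  rw [← sum_pair hab]
  exact hx.1 _ (insert_nonempty _ _)

theorem payoff_add_value_le (hx : IsPMAS γ x) {A T : Finset N} {i : N} (hA : A.Nonempty)
    (hiA : i ∉ A) (hT : T ⊆ insert i A) (hiT : i ∈ T) :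
    x T i + γ A ≤ γ (insert i A) := by
  rw [← hx.1 A hA, ← hx.1 _ (insert_nonempty _ _), sum_insert hiA]
  gcongr with j hj
  · exact hx.2 T _ hT i hiT
  · exact hx.2 A _ (subset_insert _ _) j hj

end IsPMAS

theorem IsPMAS.payoff_add_weight_le {V : Type*} [DecidableEq V] {G : SimpleGraph V}
    {w : V → V → ℝ} {γ : Finset V → ℝ} {x : Finset V → V → ℝ} (hx : IsPMAS γ x)
    {a b i : V} (hγ : IsMaxMatchingWeight G w {a, b} (γ {a, b})) (hab : G.Adj a b)
    (hia : i ≠ a) (hib : i ≠ b) {T : Finset V} (hT : T ⊆ {i, a, b}) (hiT : i ∈ T) :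
    x T i + w a b ≤ γ {i, a, b} := by
  have hA := hx.payoff_add_value_le (insert_nonempty a {b}) (by simp [hia, hib]) hT hiT
  linarith [hγ.weight_le hab (by simp) (by simp)]

theorem matchingGame_P3_K3_cover_general {V : Type*} [DecidableEq V]
    (G : SimpleGraph V) (w : V → V → ℝ)
    (hsym : ∀ a b : V, w a b = w b a)
    (hpos : ∀ a b : V, G.Adj a b → 0 < w a b)
    (γ : Finset V → ℝ)
    (hγ : ∀ S : Finset V, IsMaxMatchingWeight G w S (γ S))
    (hpmas : ∃ x : Finset V → V → ℝ, IsPMAS γ x)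
    (v1 v2 v3 v4 : V)
    (hne13 : v1 ≠ v3)
    (hne23 : v2 ≠ v3) (hne24 : v2 ≠ v4) (hne34 : v3 ≠ v4)
    (h12 : G.Adj v1 v2) (h23 : G.Adj v2 v3) (hn13 : ¬ G.Adj v1 v3)
    (h24 : G.Adj v2 v4) (h34 : G.Adj v3 v4)
    (hw : w v2 v3 ≥ w v2 v4) :
    w v2 v3 ≥ w v1 v2 + w v3 v4 ∧ w v2 v3 ≥ w v2 v4 + w v3 v4 := by
  obtain ⟨x, hx⟩ := hpmas
  have hP : w v2 v3 ≤ x {v2, v3} v2 + x {v2, v3} v3 :=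
    hx.payoff_add_payoff hne23 ▸ (hγ _).weight_le h23 (by simp) (by simp)
  have h3_in_312 : x {v2, v3} v3 + w v1 v2 ≤ γ {v3, v1, v2} :=
    hx.payoff_add_weight_le (hγ _) h12 hne13.symm hne23.symm
      (by simp [insert_subset_iff]) (by simp)
  have h2_in_234 : x {v2, v3} v2 + w v3 v4 ≤ γ {v2, v3, v4} :=
    hx.payoff_add_weight_le (hγ _) h34 hne23 hne24 (by simp [insert_subset_iff]) (by simp)
  have h3_in_234 : x {v2, v3} v3 + w v2 v4 ≤ γ {v2, v3, v4} := by
    rw [insert_comm]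
    exact hx.payoff_add_weight_le (hγ _) h24 hne23.symm hne34
      (by simp [insert_subset_iff]) (by simp)
  have wpos12 := hpos _ _ h12
  have wpos23 := hpos _ _ h23
  have wpos34 := hpos _ _ h34
  have hγ312 : γ {v3, v1, v2} ≤ max (w v1 v2) (w v2 v3) :=
    (hγ _).le_of_triple hsym (le_max_of_le_left wpos12.le) (fun h => absurd h.symm hn13)
      (fun _ => le_max_left _ _) (fun _ => hsym v3 v2 ▸ le_max_right _ _)
  have hγ234 : γ {v2, v3, v4} ≤ max (w v2 v3) (w v3 v4) :=
    (hγ _).le_of_triple hsym (le_max_of_le_left wpos23.le) (fun _ => le_max_left _ _)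
      (fun _ => le_max_right _ _) (fun _ => le_max_of_le_left hw)
  rcases le_max_iff.mp hγ312 with h1 | h1 <;> rcases le_max_iff.mp hγ234 with h2 | h2 <;>
    constructor <;> linarith

/-- (P₃,K₃)-cover (Lemma 3.2 (ii)). -/
theorem matchingGame_P3_K3_cover {V : Type*} [Fintype V] [DecidableEq V]
    (G : SimpleGraph V) (w : V → V → ℝ)
    (hsym : ∀ a b : V, w a b = w b a)
    (hpos : ∀ a b : V, G.Adj a b → 0 < w a b)
    (γ : Finset V → ℝ)
    (hγ : ∀ S : Finset V, IsMaxMatchingWeight G w S (γ S))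
    (hpmas : ∃ x : Finset V → V → ℝ, IsPMAS γ x)
    (v1 v2 v3 v4 : V)
    (hne12 : v1 ≠ v2) (hne13 : v1 ≠ v3) (hne14 : v1 ≠ v4)
    (hne23 : v2 ≠ v3) (hne24 : v2 ≠ v4) (hne34 : v3 ≠ v4)
    (h12 : G.Adj v1 v2) (h23 : G.Adj v2 v3) (hn13 : ¬ G.Adj v1 v3)
    (h24 : G.Adj v2 v4) (h34 : G.Adj v3 v4)
    (hw : w v2 v3 ≥ w v2 v4) :
    w v2 v3 ≥ w v1 v2 + w v3 v4 ∧ w v2 v3 ≥ w v2 v4 + w v3 v4 :=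
  matchingGame_P3_K3_cover_general G w hsym hpos γ hγ hpmas v1 v2 v3 v4 hne13 hne23 hne24 hne34 h12
    h23 hn13 h24 h34 hw
end

section
/- Let G = (V, E; w) be a graph with strictly positive edge weights whose matching game Γ_G admits a PMAS. Suppose distinct vertices 1, 2, 3, 4 induce a paw: the induced subgraph on {1,2,3,4} has edge set exactly {12, 23, 24, 34}, and assume w_{23} ≥ w_{24}. Then w_{23} ≥ w_{12} + w_{34} and w_{23} ≥ w_{24} + w_{34}. -/
open Finset

/-!
For a PMAS `x`, efficiency on `P ∪ {i}` and on `P` together with monotonicity give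
`x_R(i) ≤ γ(P ∪ {i}) - γ(P)` whenever `i ∈ R ⊆ P ∪ {i}`. Applied to `R = {2,3}` this yields
`w₂₃ ≤ γ(23) ≤ (γ(234) - γ(34)) + (γ(123) - γ(12))` and
`w₂₃ ≤ γ(23) ≤ (γ(234) - γ(34)) + (γ(234) - γ(24))`. Matchings on three vertices have at most
one edge, so `γ(123) ≤ max(w₁₂, w₂₃)` and, as `w₂₄ ≤ w₂₃`, `γ(234) ≤ max(w₂₃, w₃₄)`; positivity
of the weights then turns the first bound into `w₁₂ + w₃₄ ≤ w₂₃` and the second into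
`w₂₄ + w₃₄ ≤ w₂₃`.
-/

namespace IsPMAS

variable {N : Type*} [DecidableEq N] {γ : Finset N → ℝ} {x : Finset N → N → ℝ}

theorem le_sub_of_subset_insert (hx : IsPMAS γ x) {R P : Finset N} {i : N} (hiP : i ∉ P)
    (hP : P.Nonempty) (hR : R ⊆ insert i P) (hiR : i ∈ R) :
    x R i ≤ γ (insert i P) - γ P := by
  have hT := hx.1 (insert i P) (insert_nonempty i P)
  rw [sum_insert hiP] at hT
  have hPeff := hx.1 P hP
  have hPmono : ∑ j ∈ P, x P j ≤ ∑ j ∈ P, x (insert i P) j :=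
    sum_le_sum fun j hj => hx.2 _ _ (subset_insert i P) j hj
  have hRmono := hx.2 R (insert i P) hR i hiR
  linarith

theorem pair_le_add_sub (hx : IsPMAS γ x) {i j : N} {P Q : Finset N} (hij : i ≠ j)
    (hiP : i ∉ P) (hjP : j ∈ P) (hjQ : j ∉ Q) (hiQ : i ∈ Q) :
    γ {i, j} ≤ (γ (insert i P) - γ P) + (γ (insert j Q) - γ Q) := by
  have hxi := hx.le_sub_of_subset_insert (R := {i, j}) hiP ⟨j, hjP⟩
    (by simp [insert_subset_iff, hjP]) (by simp)
  have hxj := hx.le_sub_of_subset_insert (R := {i, j}) hjQ ⟨i, hiQ⟩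
    (by simp [insert_subset_iff, hiQ]) (by simp)
  have heff := hx.1 {i, j} (insert_nonempty i {j})
  rw [sum_pair hij] at heff
  linarith

end IsPMAS

namespace IsMatchingIn

variable {V : Type*} {G : SimpleGraph V} {S : Finset V} {M : Finset (V × V)}

theorem two_mul_card_le_s7 [DecidableEq V] (hM : IsMatchingIn G S M) : 2 * #M ≤ #S := by
  have hfst : #(M.image Prod.fst) = #M := card_image_of_injOn fun p hp q hq h =>
    by_contra fun hpq => (hM.2 p hp q hq hpq).1 h
  have hsnd : #(M.image Prod.snd) = #M := card_image_of_injOn fun p hp q hq h =>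
    by_contra fun hpq => (hM.2 p hp q hq hpq).2.2.2 h
  have hdisj : Disjoint (M.image Prod.fst) (M.image Prod.snd) := by
    simp only [disjoint_left, mem_image]
    rintro _ ⟨p, hp, rfl⟩ ⟨q, hq, hqp⟩
    by_cases hpq : p = q
    · subst hpq
      exact (hM.1 p hp).1.ne hqp.symm
    · exact (hM.2 p hp q hq hpq).2.1 hqp.symm
  have hsub : M.image Prod.fst ∪ M.image Prod.snd ⊆ S := by
    simp only [union_subset_iff, image_subset_iff]
    exact ⟨fun p hp => (hM.1 p hp).2.1, fun p hp => (hM.1 p hp).2.2⟩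
  calc 2 * #M = #(M.image Prod.fst ∪ M.image Prod.snd) := by
        rw [card_union_of_disjoint hdisj]; omega
    _ ≤ #S := card_le_card hsub

end IsMatchingIn

namespace IsMaxMatchingWeight

variable {V : Type*} {G : SimpleGraph V} {w : V → V → ℝ} {S : Finset V} {r : ℝ}

theorem weight_le_of_adj (h : IsMaxMatchingWeight G w S r) {a b : V} (hab : G.Adj a b)
    (ha : a ∈ S) (hb : b ∈ S) : w a b ≤ r := by
  have hM : IsMatchingIn G S {(a, b)} := by
    refine ⟨?_, ?_⟩
    · simp only [mem_singleton, forall_eq]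
      exact ⟨hab, ha, hb⟩
    · rintro p hp q hq hpq
      rw [mem_singleton] at hp hq
      exact absurd (hp.trans hq.symm) hpq
  simpa using h.2 _ hM

theorem le_of_card_le_three_s7 [DecidableEq V] (h : IsMaxMatchingWeight G w S r) (hS : #S ≤ 3)
    {B : ℝ} (hB : 0 ≤ B) (hw : ∀ a ∈ S, ∀ b ∈ S, G.Adj a b → w a b ≤ B) : r ≤ B := by
  obtain ⟨M, hM, rfl⟩ := h.1
  have hcard : (#M : ℝ) ≤ 1 := by
    have := hM.two_mul_card_le_s7
    exact_mod_cast (by omega : #M ≤ 1)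
  calc ∑ p ∈ M, w p.1 p.2 ≤ #M • B :=
        sum_le_card_nsmul _ _ _ fun p hp => hw _ (hM.1 p hp).2.1 _ (hM.1 p hp).2.2 (hM.1 p hp).1
    _ ≤ B := by
        rw [nsmul_eq_mul]
        exact mul_le_of_le_one_left hB hcard

theorem le_of_triple_s7 [DecidableEq V] (hsym : ∀ a b : V, w a b = w b a) {a b c : V}
    (h : IsMaxMatchingWeight G w {a, b, c} r) {B : ℝ} (hB : 0 ≤ B)
    (hab : G.Adj a b → w a b ≤ B) (hbc : G.Adj b c → w b c ≤ B)
    (hac : G.Adj a c → w a c ≤ B) : r ≤ B := by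
  refine h.le_of_card_le_three_s7 card_le_three hB ?_
  simp only [mem_insert, mem_singleton]
  rintro u (rfl | rfl | rfl) v (rfl | rfl | rfl) huv <;>
    first
    | exact absurd huv (G.irrefl)
    | solve_by_elim
    | (rw [hsym]; solve_by_elim [huv.symm])

end IsMaxMatchingWeight

theorem matchingGame_paw_property_general {V : Type*} [DecidableEq V]
    (G : SimpleGraph V) (w : V → V → ℝ)
    (hsym : ∀ a b : V, w a b = w b a)
    (hpos : ∀ a b : V, G.Adj a b → 0 < w a b)
    (γ : Finset V → ℝ)
    (hγ : ∀ S : Finset V, IsMaxMatchingWeight G w S (γ S))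
    (hpmas : ∃ x : Finset V → V → ℝ, IsPMAS γ x)
    (v1 v2 v3 v4 : V)
    (hne13 : v1 ≠ v3)
    (hne23 : v2 ≠ v3) (hne24 : v2 ≠ v4) (hne34 : v3 ≠ v4)
    (h12 : G.Adj v1 v2) (h23 : G.Adj v2 v3) (h24 : G.Adj v2 v4) (h34 : G.Adj v3 v4)
    (hn13 : ¬ G.Adj v1 v3)
    (hw : w v2 v3 ≥ w v2 v4) :
    w v2 v3 ≥ w v1 v2 + w v3 v4 ∧ w v2 v3 ≥ w v2 v4 + w v3 v4 := by
  obtain ⟨x, hx⟩ := hpmas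
  have hw12 := hpos _ _ h12
  have hw23 := hpos _ _ h23
  have hw34 := hpos _ _ h34
  have key₁ : γ {v2, v3} ≤ (γ {v2, v3, v4} - γ {v3, v4}) + (γ {v3, v1, v2} - γ {v1, v2}) :=
    hx.pair_le_add_sub hne23 (by simp [hne23, hne24]) (by simp) (by simp [hne13.symm, hne23.symm])
      (by simp)
  have key₂ : γ {v2, v3} ≤ (γ {v2, v3, v4} - γ {v3, v4}) + (γ {v3, v2, v4} - γ {v2, v4}) :=
    hx.pair_le_add_sub hne23 (by simp [hne23, hne24]) (by simp) (by simp [hne23.symm, hne34])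
      (by simp)
  rw [insert_comm v3 v2 {v4}] at key₂
  have g23 := (hγ {v2, v3}).weight_le_of_adj h23 (by simp) (by simp)
  have g12 := (hγ {v1, v2}).weight_le_of_adj h12 (by simp) (by simp)
  have g34 := (hγ {v3, v4}).weight_le_of_adj h34 (by simp) (by simp)
  have g24 := (hγ {v2, v4}).weight_le_of_adj h24 (by simp) (by simp)
  have gA : γ {v3, v1, v2} ≤ max (w v1 v2) (w v2 v3) :=
    (hγ _).le_of_triple_s7 hsym (hw12.le.trans (le_max_left _ _))
      (fun h => absurd h.symm hn13) (fun _ => le_max_left _ _)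
      (fun _ => (hsym _ _).le.trans (le_max_right _ _))
  have gB : γ {v2, v3, v4} ≤ max (w v2 v3) (w v3 v4) :=
    (hγ _).le_of_triple_s7 hsym (hw23.le.trans (le_max_left _ _))
      (fun _ => le_max_left _ _) (fun _ => le_max_right _ _)
      (fun _ => hw.trans (le_max_left _ _))
  have claim₁ : w v2 v3 ≥ w v1 v2 + w v3 v4 := by
    rcases max_cases (w v1 v2) (w v2 v3) with ⟨hA, hA'⟩ | ⟨hA, hA'⟩ <;>
      rcases max_cases (w v2 v3) (w v3 v4) with ⟨hB, hB'⟩ | ⟨hB, hB'⟩ <;> linarith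
  have gB' : γ {v2, v3, v4} ≤ w v2 v3 := gB.trans_eq (max_eq_left (by linarith))
  exact ⟨claim₁, by linarith⟩

/-- Paw-property (Lemma 3.4). -/
theorem matchingGame_paw_property {V : Type*} [Fintype V] [DecidableEq V]
    (G : SimpleGraph V) (w : V → V → ℝ)
    (hsym : ∀ a b : V, w a b = w b a)
    (hpos : ∀ a b : V, G.Adj a b → 0 < w a b)
    (γ : Finset V → ℝ)
    (hγ : ∀ S : Finset V, IsMaxMatchingWeight G w S (γ S))
    (hpmas : ∃ x : Finset V → V → ℝ, IsPMAS γ x)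
    (v1 v2 v3 v4 : V)
    (hne12 : v1 ≠ v2) (hne13 : v1 ≠ v3) (hne14 : v1 ≠ v4)
    (hne23 : v2 ≠ v3) (hne24 : v2 ≠ v4) (hne34 : v3 ≠ v4)
    (h12 : G.Adj v1 v2) (h23 : G.Adj v2 v3) (h24 : G.Adj v2 v4) (h34 : G.Adj v3 v4)
    (hn13 : ¬ G.Adj v1 v3) (hn14 : ¬ G.Adj v1 v4)
    (hw : w v2 v3 ≥ w v2 v4) :
    w v2 v3 ≥ w v1 v2 + w v3 v4 ∧ w v2 v3 ≥ w v2 v4 + w v3 v4 :=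
  matchingGame_paw_property_general G w hsym hpos γ hγ hpmas v1 v2 v3 v4 hne13 hne23 hne24 hne34 h12
    h23 h24 h34 hn13 hw
end

section
/- Let G = (V, E; w) be a graph with strictly positive edge weights. Suppose G is a double-star with centers u and v forming a dominant pair: u and v are adjacent, every vertex of V \ {u, v} is adjacent only to u and/or v, V \ {u, v} is an independent set, and w_{uv} ≥ w_{uu'} + w_{vv'} for all edges uu' and vv' with u', v' ∉ {u, v} (and w_{uv} ≥ w_{uu'} for all edges uu' if v has degree 1, and symmetrically). Then the matching game Γ_G admits a PMAS. -/
/-!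
Every edge of a double-star meets `u` or `v`, so a matching of `G[S]` has at most one edge at each
center. Writing `μ_c(S)` for the heaviest edge of `G[S]` from the center `c` to a leaf (`0` if there
is none), `γ(S)` is `w u v` when both centers lie in `S`, `μ_c(S)` when `c` is the only center in
`S`, and `0` otherwise; dominance of the pair gives `μ_u(V) + μ_v(V) ≤ w u v`. Hence paying `u`
the amount `μ_u(V)` and `v` the rest `w u v - μ_u(V)` when both are present, paying a lone center
`c` the amount `μ_c(S)`, and paying leaves nothing, is a PMAS.
-/

open Finset

section StarMax

variable {V : Type*} (G : SimpleGraph V) (w : V → V → ℝ)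

open Classical in
/-- The largest weight `w c z` over the neighbours `z ≠ o` of `c` in `S`, or `0` if there is
none. -/
noncomputable def starMax (c o : V) (S : Finset V) : ℝ :=
  (insert 0 ((S.filter fun z => G.Adj c z ∧ z ≠ o).image (w c))).max' (insert_nonempty _ _)

variable {G w} {c o z : V} {S T : Finset V}

lemma le_starMax (hz : z ∈ S) (hcz : G.Adj c z) (hzo : z ≠ o) : w c z ≤ starMax G w c o S := by
  classical
  exact le_max' _ _ (mem_insert_of_mem (mem_image_of_mem _ (mem_filter.2 ⟨hz, hcz, hzo⟩)))

lemma starMax_nonneg : 0 ≤ starMax G w c o S :=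
  le_max' _ _ (mem_insert_self _ _)

lemma starMax_le {x : ℝ} (hx : 0 ≤ x) (h : ∀ z ∈ S, G.Adj c z → z ≠ o → w c z ≤ x) :
    starMax G w c o S ≤ x := by
  classical
  refine max'_le _ _ _ fun y hy => ?_
  simp only [mem_insert, mem_image, mem_filter] at hy
  obtain rfl | ⟨z, ⟨hz, hcz, hzo⟩, rfl⟩ := hy
  exacts [hx, h z hz hcz hzo]

lemma starMax_mono (hST : S ⊆ T) : starMax G w c o S ≤ starMax G w c o T :=
  starMax_le starMax_nonneg fun _ hz hcz hzo => le_starMax (hST hz) hcz hzo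

lemma starMax_eq_zero_or_exists (G : SimpleGraph V) (w : V → V → ℝ) (c o : V) (S : Finset V) :
    starMax G w c o S = 0 ∨ ∃ z ∈ S, G.Adj c z ∧ z ≠ o ∧ starMax G w c o S = w c z := by
  classical
  have h := max'_mem (insert 0 ((S.filter fun z => G.Adj c z ∧ z ≠ o).image (w c)))
    (insert_nonempty _ _)
  simp only [mem_insert, mem_image, mem_filter] at h
  obtain h | ⟨z, ⟨hz, hcz, hzo⟩, h⟩ := h
  exacts [Or.inl h, Or.inr ⟨z, hz, hcz, hzo, h.symm⟩]

lemma starMax_add_starMax_le {d : V} {W : ℝ} (hW : 0 ≤ W)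
    (hdom : ∀ a b : V, a ≠ c → a ≠ d → b ≠ c → b ≠ d → G.Adj c a → G.Adj d b →
      w c a + w d b ≤ W)
    (hc : ∀ a : V, a ≠ d → G.Adj c a → w c a ≤ W)
    (hd : ∀ b : V, b ≠ c → G.Adj d b → w d b ≤ W) :
    starMax G w c d S + starMax G w d c S ≤ W := by
  obtain h | ⟨a, -, hca, had, h⟩ := starMax_eq_zero_or_exists G w c d S <;>
  obtain h' | ⟨b, -, hdb, hbc, h'⟩ := starMax_eq_zero_or_exists G w d c S <;> rw [h, h']
  · simpa using hW
  · simpa using hd b hbc hdb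
  · simpa using hc a had hca
  · exact hdom a b hca.ne' had hbc hdb.ne' hca hdb

end StarMax

section Matching

variable {V : Type*} {G : SimpleGraph V} {w : V → V → ℝ} {S : Finset V}
  {M N : Finset (V × V)} {p q : V × V} {c o : V}

lemma isMatchingIn_empty : IsMatchingIn G S ∅ := by
  simp [IsMatchingIn]

lemma isMatchingIn_singleton {a b : V} (hab : G.Adj a b) (ha : a ∈ S) (hb : b ∈ S) :
    IsMatchingIn G S {(a, b)} := by
  simp [IsMatchingIn, hab, ha, hb]

lemma IsMatchingIn.subset (hM : IsMatchingIn G S M) (hNM : N ⊆ M) : IsMatchingIn G S N :=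
  ⟨fun p hp => hM.1 p (hNM hp), fun p hp q hq => hM.2 p (hNM hp) q (hNM hq)⟩

lemma IsMatchingIn.mem_of_meet (hM : IsMatchingIn G S M) (hp : p ∈ M)
    (hpc : p.1 = c ∨ p.2 = c) : c ∈ S := by
  obtain ⟨-, h1, h2⟩ := hM.1 p hp
  rcases hpc with rfl | rfl <;> assumption

lemma IsMatchingIn.eq_of_meet (hM : IsMatchingIn G S M) (hp : p ∈ M) (hq : q ∈ M)
    (hpc : p.1 = c ∨ p.2 = c) (hqc : q.1 = c ∨ q.2 = c) : p = q := by
  by_contra hpq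
  have := hM.2 p hp q hq hpq
  rcases hpc with rfl | rfl <;> rcases hqc with h | h <;> simp_all

variable (hsym : ∀ a b : V, w a b = w b a)
include hsym

lemma IsMatchingIn.weight_le_starMax (hM : IsMatchingIn G S M) (hp : p ∈ M)
    (hpc : p.1 = c ∨ p.2 = c) (hpo : p.1 ≠ o ∧ p.2 ≠ o) : w p.1 p.2 ≤ starMax G w c o S := by
  obtain ⟨hadj, h1, h2⟩ := hM.1 p hp
  rcases hpc with hpc | hpc
  · rw [hpc] at hadj ⊢
    exact le_starMax h2 hadj hpo.2
  · rw [hpc] at hadj ⊢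
    rw [hsym]
    exact le_starMax h1 hadj.symm hpo.1

/-- A matching whose edges all meet `c` has at most one edge. -/
lemma IsMatchingIn.sum_le_starMax (hM : IsMatchingIn G S M)
    (hc : ∀ p ∈ M, p.1 = c ∨ p.2 = c) (ho : ∀ p ∈ M, p.1 ≠ o ∧ p.2 ≠ o) :
    ∑ p ∈ M, w p.1 p.2 ≤ starMax G w c o S := by
  have hcard : #M ≤ 1 :=
    card_le_one.2 fun p hp q hq => hM.eq_of_meet hp hq (hc p hp) (hc q hq)
  calc ∑ p ∈ M, w p.1 p.2
      ≤ #M • starMax G w c o S :=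
        sum_le_card_nsmul _ _ _ fun p hp => hM.weight_le_starMax hsym hp (hc p hp) (ho p hp)
    _ ≤ starMax G w c o S := by
        rw [nsmul_eq_mul]
        exact mul_le_of_le_one_left starMax_nonneg (by exact_mod_cast hcard)

end Matching

lemma IsMaxMatchingWeight.unique {V : Type*} {G : SimpleGraph V} {w : V → V → ℝ}
    {S : Finset V} {r r' : ℝ} (h : IsMaxMatchingWeight G w S r)
    (h' : IsMaxMatchingWeight G w S r') : r = r' := by
  obtain ⟨⟨M, hM, rfl⟩, hle⟩ := h
  obtain ⟨⟨M', hM', rfl⟩, hle'⟩ := h'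
  exact le_antisymm (hle' M hM) (hle M' hM')

section DoubleStar

variable {V : Type*} {G : SimpleGraph V} {w : V → V → ℝ} {S : Finset V} {u v : V}

lemma isMaxMatchingWeight_zero
    (hcover : ∀ a b : V, G.Adj a b → (a = u ∨ b = u) ∨ (a = v ∨ b = v))
    (hu : u ∉ S) (hv : v ∉ S) : IsMaxMatchingWeight G w S 0 := by
  refine ⟨⟨∅, isMatchingIn_empty, sum_empty⟩, fun M hM => ?_⟩
  have hM_empty : M = ∅ := eq_empty_of_forall_notMem fun p hp =>
    (hcover _ _ (hM.1 p hp).1).elim (fun h => hu (hM.mem_of_meet hp h))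
      (fun h => hv (hM.mem_of_meet hp h))
  simp [hM_empty]

variable (hsym : ∀ a b : V, w a b = w b a)
include hsym

lemma isMaxMatchingWeight_starMax
    (hcover : ∀ a b : V, G.Adj a b → (a = u ∨ b = u) ∨ (a = v ∨ b = v))
    (hu : u ∈ S) (hv : v ∉ S) : IsMaxMatchingWeight G w S (starMax G w u v S) := by
  constructor
  · obtain h | ⟨z, hz, huz, -, h⟩ := starMax_eq_zero_or_exists G w u v S
    · exact ⟨∅, isMatchingIn_empty, by simp [h]⟩
    · exact ⟨{(u, z)}, isMatchingIn_singleton huz hu hz, by simp [h]⟩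
  · intro M hM
    have avoid : ∀ p ∈ M, ¬(p.1 = v ∨ p.2 = v) := fun p hp h => hv (hM.mem_of_meet hp h)
    exact hM.sum_le_starMax hsym (fun p hp => (hcover _ _ (hM.1 p hp).1).resolve_right (avoid p hp))
      (fun p hp => not_or.1 (avoid p hp))

lemma isMaxMatchingWeight_of_mem_of_mem (huv : G.Adj u v)
    (hcover : ∀ a b : V, G.Adj a b → (a = u ∨ b = u) ∨ (a = v ∨ b = v))
    (hkey : starMax G w u v S + starMax G w v u S ≤ w u v) (hu : u ∈ S) (hv : v ∈ S) :
    IsMaxMatchingWeight G w S (w u v) := by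
  classical
  refine ⟨⟨{(u, v)}, isMatchingIn_singleton huv hu hv, sum_singleton _ _⟩, fun M hM => ?_⟩
  by_cases hboth : ∃ p ∈ M, (p.1 = u ∨ p.2 = u) ∧ (p.1 = v ∨ p.2 = v)
  · obtain ⟨⟨a, b⟩, hp, hpu, hpv⟩ := hboth
    have hM_single : M = {(a, b)} := eq_singleton_iff_unique_mem.2 ⟨hp, fun q hq =>
      (hcover _ _ (hM.1 q hq).1).elim (hM.eq_of_meet hq hp · hpu) (hM.eq_of_meet hq hp · hpv)⟩
    rw [hM_single, sum_singleton]
    rcases hpu with rfl | rfl <;> rcases hpv with h | h <;> subst h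
    exacts [absurd rfl huv.ne, le_rfl, (hsym _ _).le, absurd rfl huv.ne]
  · push Not at hboth
    have hMu := hM.subset (filter_subset (fun p => p.1 = u ∨ p.2 = u) M)
    have hMv := hM.subset (filter_subset (fun p => ¬(p.1 = u ∨ p.2 = u)) M)
    rw [← sum_filter_add_sum_filter_not M fun p => p.1 = u ∨ p.2 = u]
    refine (add_le_add (hMu.sum_le_starMax hsym ?_ ?_) (hMv.sum_le_starMax hsym ?_ ?_)).trans hkey
    · exact fun p hp => (mem_filter.1 hp).2
    · exact fun p hp => hboth p (mem_filter.1 hp).1 (mem_filter.1 hp).2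
    · exact fun p hp => (hcover _ _ (hM.1 p (mem_filter.1 hp).1).1).resolve_left (mem_filter.1 hp).2
    · exact fun p hp => not_or.1 (mem_filter.1 hp).2

end DoubleStar

lemma weight_le_of_dominant {V : Type*} {G : SimpleGraph V} {w : V → V → ℝ}
    (hpos : ∀ a b : V, G.Adj a b → 0 < w a b) {c d : V} {W : ℝ}
    (hdom : ∀ a b : V, a ≠ c → a ≠ d → b ≠ c → b ≠ d → G.Adj c a → G.Adj d b →
      w c a + w d b ≤ W)
    (hdomc : (∀ b : V, b ≠ c → ¬ G.Adj d b) → ∀ a : V, a ≠ d → G.Adj c a → w c a ≤ W)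
    {a : V} (had : a ≠ d) (hca : G.Adj c a) : w c a ≤ W := by
  by_cases h : ∃ b : V, b ≠ c ∧ G.Adj d b
  · obtain ⟨b, hbc, hdb⟩ := h
    linarith [hdom a b hca.ne' had hbc hdb.ne' hca hdb, hpos d b hdb]
  · push Not at h
    exact hdomc h a had hca

theorem exists_isPMAS_of_two_centers {N : Type*} [DecidableEq N] {γ : Finset N → ℝ} {u v : N}
    (huv : u ≠ v) {f g : Finset N → ℝ} (hf : Monotone f) (hg : Monotone g) {a W : ℝ}
    (hfa : ∀ S, f S ≤ a) (hgW : ∀ S, g S + a ≤ W)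
    (hγ : ∀ S, γ S = if u ∈ S then (if v ∈ S then W else f S) else if v ∈ S then g S else 0) :
    ∃ x : Finset N → N → ℝ, IsPMAS γ x := by
  refine ⟨fun S i => (if i = u then (if v ∈ S then a else f S) else 0) +
    (if i = v then (if u ∈ S then W - a else g S) else 0), fun S _ => ?_, fun S T hST i hi => ?_⟩
  · rw [sum_add_distrib, sum_ite_eq', sum_ite_eq', hγ]
    split_ifs <;> ring
  · have := hf hST
    have := hg hST
    have := hfa S
    have := hgW S
    dsimp only
    split_ifs <;> grind

/-- A matching game on a double-star whose centers form a dominant pair admits a PMAS. -/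
theorem matchingGame_doubleStar_pmas {V : Type*} [Fintype V] [DecidableEq V]
    (G : SimpleGraph V) (w : V → V → ℝ)
    (hsym : ∀ a b : V, w a b = w b a)
    (hpos : ∀ a b : V, G.Adj a b → 0 < w a b)
    (γ : Finset V → ℝ)
    (hγ : ∀ S : Finset V, IsMaxMatchingWeight G w S (γ S))
    (u v : V) (huv : G.Adj u v)
    (hindep : ∀ z z' : V, z ≠ u → z ≠ v → z' ≠ u → z' ≠ v → ¬ G.Adj z z')
    (hdom : ∀ u' v' : V, u' ≠ u → u' ≠ v → v' ≠ u → v' ≠ v →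
      G.Adj u u' → G.Adj v v' → w u u' + w v v' ≤ w u v)
    (hdomu : (∀ v' : V, v' ≠ u → ¬ G.Adj v v') →
      ∀ u' : V, u' ≠ v → G.Adj u u' → w u u' ≤ w u v)
    (hdomv : (∀ u' : V, u' ≠ v → ¬ G.Adj u u') →
      ∀ v' : V, v' ≠ u → G.Adj v v' → w v v' ≤ w u v) :
    ∃ x : Finset V → V → ℝ, IsPMAS γ x := by
  have hcover : ∀ a b : V, G.Adj a b → (a = u ∨ b = u) ∨ (a = v ∨ b = v) := by
    intro a b hab
    by_contra h
    push Not at h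
    exact hindep a b h.1.1 h.2.1 h.1.2 h.2.2 hab
  have hdom' : ∀ a b : V, a ≠ v → a ≠ u → b ≠ v → b ≠ u → G.Adj v a → G.Adj u b →
      w v a + w u b ≤ w u v := fun a b h1 h2 h3 h4 h5 h6 =>
    (add_comm _ _).trans_le (hdom b a h4 h3 h2 h1 h6 h5)
  have hkey : starMax G w u v univ + starMax G w v u univ ≤ w u v :=
    starMax_add_starMax_le (hpos u v huv).le hdom (fun _ => weight_le_of_dominant hpos hdom hdomu)
      (fun _ => weight_le_of_dominant hpos hdom' hdomv)
  refine exists_isPMAS_of_two_centers (f := starMax G w u v) (g := starMax G w v u)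
    (a := starMax G w u v univ) huv.ne (fun _ _ => starMax_mono) (fun _ _ => starMax_mono)
    (fun S => starMax_mono (subset_univ S))
    (fun S => by linarith [starMax_mono (G := G) (w := w) (c := v) (o := u) (subset_univ S)])
    fun S => ?_
  split_ifs with hu hv hv
  · exact (hγ S).unique (isMaxMatchingWeight_of_mem_of_mem hsym huv hcover
      (hkey.trans' (add_le_add (starMax_mono (subset_univ S)) (starMax_mono (subset_univ S))))
      hu hv)
  · exact (hγ S).unique (isMaxMatchingWeight_starMax hsym hcover hu hv)
  · exact (hγ S).unique (isMaxMatchingWeight_starMax hsym (fun a b h => (hcover a b h).symm) hv hu)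
  · exact (hγ S).unique (isMaxMatchingWeight_zero hcover hu hv)
end
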